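/- Let r >= 2 and n be divisible by 2r-1. The blow-up of the r-triangle T^r on n vertices in which the three base vertices are replaced by classes of size n/(2r-1) and each of the remaining r-2 vertices is replaced by a class of size 2n/(2r-1) has minimum positive co-degree exactly 2n/(2r-1). -/
import Mathlib


/-- The blow-up of the `r`-triangle `T^r` on `n = (2r-1)m` vertices in
which the three base vertices get classes of size `m = n/(2r-1)` and the remaining
`r-2` vertices get classes of size `2m` has minimum positive co-degree exactly
`2m = 2n/(2r-1)`. The class of a vertex is recorded by `c`; an `r`-set is an edge
iff its image under `c` consists of all classes except one of the three base classes
(the classes `i` with `(i : ℕ) < 3`). -/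
theorem stmt_1 (r m n : ℕ) (hr : 2 ≤ r) (hm : 1 ≤ m) (hn : n = (2 * r - 1) * m)
    (c : Fin n → Fin (r + 1))
    (hsize : ∀ i : Fin (r + 1),
      (Finset.univ.filter (fun v => c v = i)).card = if (i : ℕ) < 3 then m else 2 * m)
    (H : Finset (Finset (Fin n)))
    (hH : H = Finset.univ.filter (fun e : Finset (Fin n) => e.card = r ∧
      ∃ b : Fin (r + 1), (b : ℕ) < 3 ∧ e.image c = Finset.univ.erase b)) :
    (∀ S : Finset (Fin n), S.card = r - 1 → (∃ e ∈ H, S ⊆ e) →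
      2 * m ≤ (H.filter (fun e => S ⊆ e)).card) ∧
    (∃ S : Finset (Fin n), S.card = r - 1 ∧ (∃ e ∈ H, S ⊆ e) ∧
      (H.filter (fun e => S ⊆ e)).card = 2 * m) := by
  classical
  have memH : ∀ e : Finset (Fin n), e ∈ H ↔ (e.card = r ∧
      ∃ b : Fin (r + 1), (b : ℕ) < 3 ∧ e.image c = Finset.univ.erase b) := by
    intro e; rw [hH]; simp
  have hbcard : ∀ b : Fin (r+1), (Finset.univ.erase b).card = r := by
    intro b
    rw [Finset.card_erase_of_mem (Finset.mem_univ b), Finset.card_univ, Fintype.card_fin]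
    omega
  -- key lemma: the co-degree is always exactly 2m
  have key : ∀ S : Finset (Fin n), S.card = r - 1 → (∃ e ∈ H, S ⊆ e) →
      (H.filter (fun e => S ⊆ e)).card = 2 * m := by
    intro S hS he
    obtain ⟨e, heH, hSe⟩ := he
    obtain ⟨hcard, b, hb3, himg⟩ := (memH e).mp heH
    have split : ∀ e' : Finset (Fin n), e'.card = r → S ⊆ e' →
        ∃ w, w ∉ S ∧ e' = insert w S := by
      intro e' hc' hSe'
      have h1 : (e' \ S).card = 1 := by
        rw [Finset.card_sdiff_of_subset hSe', hc', hS]; omega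
      obtain ⟨v, hv⟩ := Finset.card_eq_one.mp h1
      have hvm := Finset.mem_sdiff.mp (hv ▸ Finset.mem_singleton_self v)
      refine ⟨v, hvm.2, ?_⟩
      apply Finset.Subset.antisymm
      · intro x hx
        by_cases hxS : x ∈ S
        · exact Finset.mem_insert_of_mem hxS
        · have : x ∈ e' \ S := Finset.mem_sdiff.mpr ⟨hx, hxS⟩
          rw [hv, Finset.mem_singleton] at this
          simp [this]
      · intro x hx
        rcases Finset.mem_insert.mp hx with h | h
        · exact h ▸ hvm.1
        · exact hSe' h
    have hinj : Set.InjOn c ↑e := Finset.card_image_iff.mp (by rw [himg, hbcard, hcard])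
    obtain ⟨v, hvS, heS⟩ := split e hcard hSe
    have hve : v ∈ e := heS ▸ Finset.mem_insert_self v S
    set j := c v with hj
    have hjb : j ≠ b := by
      have : j ∈ e.image c := Finset.mem_image_of_mem c hve
      rw [himg] at this
      exact (Finset.mem_erase.mp this).1
    have hjS : j ∉ S.image c := by
      intro h
      obtain ⟨u, huS, hu⟩ := Finset.mem_image.mp h
      have : u = v := hinj (Finset.mem_coe.mpr (hSe huS)) (Finset.mem_coe.mpr hve) hu
      exact hvS (this ▸ huS)
    have hSimg : S.image c = (Finset.univ.erase b).erase j := by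
      rw [← himg, heS, Finset.image_insert, ← hj, Finset.erase_insert hjS]
    set W : Finset (Fin n) :=
      Finset.univ.filter (fun w => c w = j ∨ (c w = b ∧ (j : ℕ) < 3)) with hW
    have hWnS : ∀ w ∈ W, w ∉ S := by
      intro w hw hwS
      have hmem : c w ∈ S.image c := Finset.mem_image_of_mem c hwS
      rw [hSimg] at hmem
      rw [hW, Finset.mem_filter] at hw
      rcases hw.2 with h' | ⟨h', _⟩
      · exact (Finset.mem_erase.mp hmem).1 h'
      · exact (Finset.mem_erase.mp (Finset.mem_of_mem_erase hmem)).1 h'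
    have hfilt : H.filter (fun e' => S ⊆ e') = W.image (fun w => insert w S) := by
      ext e'
      simp only [Finset.mem_filter, Finset.mem_image, memH]
      constructor
      · rintro ⟨⟨hc', b', hb'3, himg'⟩, hSe'⟩
        obtain ⟨w, hwS, rfl⟩ := split e' hc' hSe'
        refine ⟨w, ?_, rfl⟩
        rw [hW, Finset.mem_filter]
        refine ⟨Finset.mem_univ _, ?_⟩
        rw [Finset.image_insert, hSimg] at himg'
        have hb' : b' = b ∨ b' = j := by
          by_contra h
          push_neg at h
          have hmem : b' ∈ insert (c w) ((Finset.univ.erase b).erase j) :=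
            Finset.mem_insert_of_mem (by simp [h.1, h.2])
          rw [himg'] at hmem
          exact (Finset.mem_erase.mp hmem).1 rfl
        rcases hb' with h | h
        · left
          rw [h] at himg'
          have hmem : j ∈ insert (c w) ((Finset.univ.erase b).erase j) := by
            rw [himg']; simp [hjb]
          rcases Finset.mem_insert.mp hmem with h2 | h2
          · exact h2.symm
          · exact absurd rfl (Finset.mem_erase.mp h2).1
        · right
          rw [h] at himg' hb'3
          refine ⟨?_, hb'3⟩
          have hmem : b ∈ insert (c w) ((Finset.univ.erase b).erase j) := by
            rw [himg']; simp [Ne.symm hjb]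
          rcases Finset.mem_insert.mp hmem with h2 | h2
          · exact h2.symm
          · exact absurd rfl (Finset.mem_erase.mp (Finset.mem_of_mem_erase h2)).1
      · rintro ⟨w, hw, rfl⟩
        have hwS : w ∉ S := hWnS w hw
        rw [hW, Finset.mem_filter] at hw
        refine ⟨⟨?_, ?_⟩, Finset.subset_insert _ _⟩
        · rw [Finset.card_insert_of_notMem hwS, hS]; omega
        · rw [Finset.image_insert, hSimg]
          rcases hw.2 with h' | ⟨h', hj3⟩
          · refine ⟨b, hb3, ?_⟩
            rw [h', Finset.insert_erase (by simp [hjb])]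
          · refine ⟨j, hj3, ?_⟩
            rw [h', Finset.erase_right_comm, Finset.insert_erase (by simp [Ne.symm hjb])]
    rw [hfilt, Finset.card_image_of_injOn]
    · by_cases hj3 : (j : ℕ) < 3
      · have hWeq : W = Finset.univ.filter (fun w => c w = j) ∪
            Finset.univ.filter (fun w => c w = b) := by
          ext w
          simp only [hW, Finset.mem_filter, Finset.mem_union, Finset.mem_univ, true_and]
          constructor
          · rintro (h | ⟨h, _⟩)
            · exact Or.inl h
            · exact Or.inr h
          · rintro (h | h)
            · exact Or.inl h
            · exact Or.inr ⟨h, hj3⟩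
        have hdisj : Disjoint (Finset.univ.filter (fun w => c w = j))
            (Finset.univ.filter (fun w => c w = b)) := by
          rw [Finset.disjoint_filter]
          intro w _ h1 h2
          exact hjb (h1 ▸ h2 ▸ rfl)
        rw [hWeq, Finset.card_union_of_disjoint hdisj, hsize, hsize, if_pos hj3, if_pos hb3]
        omega
      · have hWeq : W = Finset.univ.filter (fun w => c w = j) := by
          ext w
          simp only [hW, Finset.mem_filter, Finset.mem_univ, true_and]
          constructor
          · rintro (h | ⟨_, h⟩)
            · exact h
            · exact absurd h hj3
          · exact fun h => Or.inl h
        rw [hWeq, hsize, if_neg hj3]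
    · intro w1 h1 w2 h2 heq
      have heq' : insert w1 S = insert w2 S := heq
      have hw1 : w1 ∉ S := hWnS w1 h1
      have : w1 ∈ insert w2 S := heq' ▸ Finset.mem_insert_self w1 S
      rcases Finset.mem_insert.mp this with h | h
      · exact h
      · exact absurd h hw1
  -- construct an edge to witness existence
  have hne : ∀ i : Fin (r+1), ∃ v, c v = i := by
    intro i
    have h1 := hsize i
    have h2 : 0 < (Finset.univ.filter (fun v => c v = i)).card := by
      rw [h1]; split <;> omega
    obtain ⟨v, hv⟩ := Finset.card_pos.mp h2
    exact ⟨v, (Finset.mem_filter.mp hv).2⟩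
  choose g hg using hne
  have hginj : Function.Injective g := fun a b h => by rw [← hg a, ← hg b, h]
  set e0 : Finset (Fin n) := (Finset.univ.erase (0 : Fin (r+1))).image g with he0
  have hcard0 : e0.card = r := by
    rw [he0, Finset.card_image_of_injective _ hginj, hbcard]
  have himg0 : e0.image c = Finset.univ.erase (0 : Fin (r+1)) := by
    rw [he0, Finset.image_image]
    ext i
    simp [hg]
  have he0H : e0 ∈ H := (memH e0).mpr ⟨hcard0, 0, by simp, himg0⟩
  have he0ne : e0.Nonempty := Finset.card_pos.mp (by omega)
  obtain ⟨x, hx⟩ := he0ne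
  refine ⟨fun S hS hex => (key S hS hex).ge, ⟨e0.erase x, ?_, ⟨e0, he0H, Finset.erase_subset x e0⟩, ?_⟩⟩
  · rw [Finset.card_erase_of_mem hx, hcard0]
  · exact key _ (by rw [Finset.card_erase_of_mem hx, hcard0]) ⟨e0, he0H, Finset.erase_subset x e0⟩
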